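/- For every integer n ≥ 0, the set of roots in H of the polynomial AS^{n+1}(x) − t^{−1} (where AS(x) = x^p − x) equals {s_n + c : c ∈ F with AS^{n+1}(c) = 0}, where constants c ∈ F are viewed as elements of H; this set has exactly p^{n+1} elements, and every root u ≠ s_n satisfies v(s_n − u) = 0 (i.e., the Krasner constant of s_n is 0). -/

import Mathlib

/-!
Common setup: `p` a prime, `F` an algebraic closure of `𝔽_p`, `H = F((t^ℚ))` the Hahn series
field with its canonical additive valuation `v` (minimum of the support), the Newton–Puiseux
subfield `K ⊆ H`, the elements `s_n`, the series `s = ∑ tⁿ·s_n`, the truncations `s_{n,i}`,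
the rationals `δ(n,i) = n - 1/p^(i+1)`, and the depth-zero valuations `ω_{a,δ}`.
-/

open Polynomial HahnSeries

variable (p : ℕ) [Fact p.Prime]

/-- `F`, an algebraic closure of `𝔽_p`. -/
abbrev Fbar : Type := AlgebraicClosure (ZMod p)

/-- The Hahn series field `H = F((t^ℚ))`. -/
abbrev H : Type := HahnSeries ℚ (Fbar p)

/-- The additive valuation `v(f) = min (supp f)`, with `v 0 = ∞`. -/
noncomputable def v (f : H p) : WithTop ℚ := f.orderTop

/-- The exponent `-1/p^(j+1)`. -/
def expo (j : ℕ) : ℚ := -((p : ℚ) ^ (j + 1))⁻¹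

lemma one_lt_p : (1 : ℚ) < p := by
  exact_mod_cast (Fact.out : p.Prime).one_lt

lemma expo_mono : Monotone (expo p) := by
  intro j k hjk
  have hp : (1 : ℚ) < p := one_lt_p p
  have h1 : (0 : ℚ) < (p : ℚ) ^ (j + 1) := pow_pos (lt_trans one_pos hp) _
  have h2 : (p : ℚ) ^ (j + 1) ≤ (p : ℚ) ^ (k + 1) :=
    pow_le_pow_right₀ (le_of_lt hp) (by omega)
  have := inv_anti₀ h1 h2
  simp only [expo, neg_le_neg_iff]
  linarith

lemma isPWO_univ_nat : (Set.univ : Set ℕ).IsPWO :=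
  (Set.isWF_univ_iff.2 inferInstance).isPWO

-- `s_n = ∑_{j ≥ n} C(j,n)·t^(-1/p^(j+1))`, where `C(j,n)` is `j.choose n` reduced mod `p`.
open Classical in
noncomputable def sn (n : ℕ) : H p where
  coeff q := if h : ∃ j : ℕ, n ≤ j ∧ q = expo p j then (Nat.choose h.choose n : Fbar p) else 0
  isPWO_support' := by
    apply ((isPWO_univ_nat.image_of_monotone (expo_mono p)).mono)
    intro q hq
    simp only [Function.mem_support] at hq
    have h : ∃ j : ℕ, n ≤ j ∧ q = expo p j := by
      by_contra h
      rw [dif_neg h] at hq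
      exact hq rfl
    obtain ⟨j, _, rfl⟩ := h
    exact ⟨j, Set.mem_univ j, rfl⟩

-- `s = ∑_{n ≥ 0} tⁿ·s_n`, i.e. the series with coefficient `C(j,n)` at `n - 1/p^(j+1)`.
open Classical in
noncomputable def sH : H p where
  coeff q := if h : ∃ nj : ℕ × ℕ, nj.1 ≤ nj.2 ∧ q = (nj.1 : ℚ) + expo p nj.2 then
      (Nat.choose h.choose.2 h.choose.1 : Fbar p) else 0
  isPWO_support' := by
    have hmono : Monotone (fun nj : ℕ × ℕ => (nj.1 : ℚ) + expo p nj.2) := by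
      intro a b hab
      exact add_le_add (by exact_mod_cast hab.1) (expo_mono p hab.2)
    apply ((isPWO_univ_nat.prod isPWO_univ_nat).image_of_monotone hmono).mono
    intro q hq
    simp only [Function.mem_support] at hq
    have h : ∃ nj : ℕ × ℕ, nj.1 ≤ nj.2 ∧ q = (nj.1 : ℚ) + expo p nj.2 := by
      by_contra h
      rw [dif_neg h] at hq
      exact hq rfl
    obtain ⟨nj, _, rfl⟩ := h
    exact ⟨nj, by simp [Set.mem_prod], rfl⟩

/-- The additive map `ℤ →+ ℚ`, `k ↦ k/N`. -/
def embQ (N : ℕ) : ℤ →+ ℚ where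
  toFun k := (k : ℚ) / (N : ℚ)
  map_zero' := by simp
  map_add' := by intros; push_cast; ring

lemma embQ_inj {N : ℕ} (hN : 0 < N) : Function.Injective (embQ N) := by
  intro a b hab
  have hN' : (0 : ℚ) < N := by exact_mod_cast hN
  simpa [embQ, div_eq_div_iff hN'.ne' hN'.ne', hN'.ne'] using hab

lemma embQ_mono {N : ℕ} (hN : 0 < N) : ∀ g g' : ℤ, embQ N g ≤ embQ N g' ↔ g ≤ g' := by
  intro g g'
  have hN' : (0 : ℚ) < N := by exact_mod_cast hN
  simp [embQ, div_le_div_iff_of_pos_right hN', Int.cast_le]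

lemma embQ_strictMono {N : ℕ} (hN : 0 < N) : StrictMono (embQ N) := by
  have := embQ_mono hN
  exact strictMono_of_le_iff_le fun a b => (this a b).symm

/-- Laurent series (Hahn series over `ℤ`) mapped into `H p` via `k ↦ k/N`. -/
noncomputable def laurentInc (N : ℕ) (hN : 0 < N) : HahnSeries ℤ (Fbar p) →+* H p :=
  HahnSeries.embDomainRingHom (embQ N) (embQ_inj hN) (embQ_mono hN)

lemma mem_range_laurentInc_iff {N : ℕ} (hN : 0 < N) (f : H p) :
    (∃ g, laurentInc p N hN g = f) ↔ ∀ q ∈ f.support, ∃ k : ℤ, q = (k : ℚ) / N := by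
  constructor
  · rintro ⟨g, rfl⟩ q hq
    obtain ⟨k, -, rfl⟩ := HahnSeries.support_embDomain_subset hq
    exact ⟨k, rfl⟩
  · intro hf
    classical
    have hpwo : (Function.support fun k : ℤ => f.coeff (embQ N k)).IsPWO := by
      apply Set.IsWF.isPWO
      rw [Set.isWF_iff_no_descending_seq]
      intro φ hφ hmem
      apply Set.isWF_iff_no_descending_seq.mp f.isWF_support (fun n => embQ N (φ n))
        ((embQ_strictMono hN).comp_strictAnti hφ)
      intro n
      exact hmem n
    refine ⟨⟨fun k => f.coeff (embQ N k), hpwo⟩, ?_⟩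
    apply HahnSeries.ext
    funext q
    by_cases hq : q ∈ Set.range (embQ N)
    · obtain ⟨k, rfl⟩ := hq
      exact HahnSeries.embDomain_mk_coeff (embQ_inj hN) (embQ_mono hN)
    · rw [show (laurentInc p N hN ⟨fun k => f.coeff (embQ N k), hpwo⟩).coeff q = 0 from
        HahnSeries.embDomain_notin_range hq]
      by_contra hne
      obtain ⟨k, hk⟩ := hf q (by simpa [HahnSeries.mem_support] using Ne.symm hne)
      exact hq ⟨k, hk.symm⟩

/-- The Newton–Puiseux field `K`: Hahn series whose support lies in `(1/N)·ℤ` for some `N > 0`. -/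
noncomputable def KNP : Subfield (H p) where
  carrier := {f : H p | ∃ N : ℕ, 0 < N ∧ ∀ q ∈ f.support, ∃ k : ℤ, q = (k : ℚ) / N}
  zero_mem' := ⟨1, one_pos, by simp⟩
  one_mem' := by
    refine ⟨1, one_pos, fun q hq => ?_⟩
    rw [HahnSeries.support_one] at hq
    exact ⟨0, by simp [Set.mem_singleton_iff.mp hq]⟩
  add_mem' := by
    rintro x y ⟨N, hN, hx⟩ ⟨M, hM, hy⟩
    refine ⟨N * M, Nat.mul_pos hN hM, fun q hq => ?_⟩
    rcases HahnSeries.support_add_subset x y hq with h | h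
    · obtain ⟨k, rfl⟩ := hx q h
      refine ⟨k * M, ?_⟩
      have hM' : (M : ℚ) ≠ 0 := by exact_mod_cast hM.ne'
      have hN' : (N : ℚ) ≠ 0 := by exact_mod_cast hN.ne'
      push_cast
      field_simp
    · obtain ⟨k, rfl⟩ := hy q h
      refine ⟨k * N, ?_⟩
      have hM' : (M : ℚ) ≠ 0 := by exact_mod_cast hM.ne'
      have hN' : (N : ℚ) ≠ 0 := by exact_mod_cast hN.ne'
      push_cast
      field_simp
  neg_mem' := by
    rintro x ⟨N, hN, hx⟩
    exact ⟨N, hN, fun q hq => hx q (by rwa [HahnSeries.support_neg] at hq)⟩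
  mul_mem' := by
    rintro x y ⟨N, hN, hx⟩ ⟨M, hM, hy⟩
    refine ⟨N * M, Nat.mul_pos hN hM, fun q hq => ?_⟩
    obtain ⟨q₁, hq₁, q₂, hq₂, rfl⟩ := HahnSeries.support_mul_subset hq
    obtain ⟨k₁, rfl⟩ := hx q₁ hq₁
    obtain ⟨k₂, rfl⟩ := hy q₂ hq₂
    refine ⟨k₁ * M + k₂ * N, ?_⟩
    have hM' : (M : ℚ) ≠ 0 := by exact_mod_cast hM.ne'
    have hN' : (N : ℚ) ≠ 0 := by exact_mod_cast hN.ne'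
    push_cast
    field_simp
  inv_mem' := by
    rintro x ⟨N, hN, hx⟩
    obtain ⟨g, rfl⟩ := (mem_range_laurentInc_iff p hN x).mpr hx
    rw [← map_inv₀]
    exact ⟨N, hN, ((mem_range_laurentInc_iff p hN _).mp ⟨g⁻¹, rfl⟩)⟩

/-- The truncation `s_{n,i} = ∑_{m<n} tᵐ·s_m + tⁿ·∑_{n ≤ j < i} C(j,n)·t^(-1/p^(j+1))`. -/
noncomputable def strunc (n i : ℕ) : H p :=
  (∑ m ∈ Finset.range n, HahnSeries.single (m : ℚ) 1 * sn p m)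
  + HahnSeries.single (n : ℚ) 1 *
      (∑ j ∈ Finset.Ico n i, HahnSeries.single (expo p j) ((Nat.choose j n : Fbar p)))

/-- `δ(n,i) = n - 1/p^(i+1)`. -/
def dlt (n i : ℕ) : ℚ := (n : ℚ) - ((p : ℚ) ^ (i + 1))⁻¹

/-- The depth-zero valuation `ω_{a,δ}(f) = min_ℓ (v(a_ℓ) + ℓ·δ)`, where
`f = ∑_ℓ a_ℓ·(x-a)^ℓ` is the Taylor expansion of `f` at `a`. -/
noncomputable def om (a : H p) (δ : ℚ) (f : Polynomial (H p)) : WithTop ℚ :=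
  (Finset.range (f.natDegree + 1)).inf
    fun ℓ => v p ((Polynomial.taylor a f).coeff ℓ) + (((ℓ : ℚ) * δ : ℚ) : WithTop ℚ)

-- The degree `[K(b) : K]` of an element `b ∈ H` over the Newton–Puiseux field `K`.
set_option synthInstance.maxHeartbeats 1000000 in
noncomputable def degK (b : H p) : ℕ :=
  Module.finrank (KNP p) (IntermediateField.adjoin (KNP p) {b})

lemma tinv_mem : HahnSeries.single (-1 : ℚ) (1 : Fbar p) ∈ KNP p := by
  refine ⟨1, one_pos, fun q hq => ?_⟩
  have := HahnSeries.support_single_subset hq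
  exact ⟨-1, by simp [Set.mem_singleton_iff.mp this]⟩

/-- `t^(-1) = single (-1) 1` as an element of `K`. -/
noncomputable def tinv : KNP p := ⟨HahnSeries.single (-1 : ℚ) (1 : Fbar p), tinv_mem p⟩

/-- The `k`-fold composition of the Artin–Schreier polynomial `AS(x) = x^p - x` over `H`,
with `AS^0(x) = x`. -/
noncomputable def ASiterH : ℕ → Polynomial (H p)
  | 0 => X
  | k + 1 => ((X : Polynomial (H p)) ^ p - X).comp (ASiterH k)

/-! Frobenius sends `t^(-1/p^(j+1))` to `t^(-1/p^j)`, so on the truncations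
`∑_{j<m} C(j,n) t^(-1/p^(j+1))` the identities `AS(s₀) = t⁻¹` and `AS(s_{n+1}) = sₙ` reduce to
Pascal's rule. The discarded tails have valuation `-1/p^(m+1) → 0`, while every series involved
is supported in negative exponents, so the identities hold exactly and `AS^(n+1)(sₙ) = t⁻¹`.
As `AS` is additive in characteristic `p`, the roots are `sₙ + ker AS^(n+1)`. The polynomial
`AS^(n+1)` has degree `p^(n+1)` and derivative `±1`, so it has `p^(n+1)` distinct roots in the
algebraically closed field `F`, and no others in `H`. Distinct roots differ by a nonzero
constant, of valuation `0`. -/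

noncomputable def artinSchreierIter (R : Type*) [CommRing R] (p : ℕ) : ℕ → R[X]
  | 0 => X
  | k + 1 => ((X : R[X]) ^ p - X).comp (artinSchreierIter R p k)

lemma aeval_artinSchreierIter {R A : Type*} [CommRing R] [CommRing A] [Algebra R A]
    (p k : ℕ) (x : A) :
    aeval x (artinSchreierIter R p k) = (fun y : A => y ^ p - y)^[k] x := by
  induction k with
  | zero => simp [artinSchreierIter]
  | succ k ih => simp [artinSchreierIter, ih, Function.iterate_succ_apply']

lemma natDegree_artinSchreierIter {R : Type*} [CommRing R] [IsDomain R] (k : ℕ) :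
    (artinSchreierIter R p k).natDegree = p ^ k := by
  have hp := (Fact.out : p.Prime).one_lt
  induction k with
  | zero => simp [artinSchreierIter]
  | succ k ih =>
    have hAS : ((X : R[X]) ^ p - X).natDegree = p := by
      rw [natDegree_sub_eq_left_of_natDegree_lt] <;> simp [hp]
    rw [artinSchreierIter, natDegree_comp, hAS, ih, pow_succ, mul_comm]

lemma derivative_artinSchreierIter {R : Type*} [CommRing R] (p : ℕ) [CharP R p] (k : ℕ) :
    derivative (artinSchreierIter R p k) = (-1) ^ k := by
  induction k with
  | zero => simp [artinSchreierIter]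
  | succ k ih =>
    rw [artinSchreierIter, derivative_comp, ih, pow_succ]
    simp [derivative_X_pow]

lemma separable_artinSchreierIter {R : Type*} [CommRing R] (p : ℕ) [CharP R p] (k : ℕ) :
    (artinSchreierIter R p k).Separable :=
  ⟨0, (-1) ^ k, by rw [derivative_artinSchreierIter, zero_mul, zero_add, ← mul_pow]; simp⟩

lemma artinSchreierIter_ne_zero {R : Type*} [CommRing R] [IsDomain R] (k : ℕ) :
    artinSchreierIter R p k ≠ 0 :=
  ne_zero_of_natDegree_gt (n := 0) <| by
    rw [natDegree_artinSchreierIter]; exact pow_pos (Fact.out : p.Prime).pos k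

lemma rootSet_artinSchreierIter {K A : Type*} [Field K] [CommRing A] [IsDomain A] [Algebra K A]
    (k : ℕ) : (artinSchreierIter K p k).rootSet A = {x : A | (fun y : A => y ^ p - y)^[k] x = 0} := by
  ext x
  rw [mem_rootSet, aeval_artinSchreierIter]
  simp [artinSchreierIter_ne_zero]

lemma ncard_iterate_artinSchreier_eq_zero (K : Type*) [Field K] [IsAlgClosed K] [CharP K p]
    (k : ℕ) : {c : K | (fun y : K => y ^ p - y)^[k] c = 0}.ncard = p ^ k := by
  classical
  rw [← rootSet_artinSchreierIter p (K := K), ← Nat.card_coe_set_eq, Nat.card_eq_fintype_card,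
    card_rootSet_eq_natDegree (separable_artinSchreierIter p k) (IsAlgClosed.splits _),
    natDegree_artinSchreierIter]

lemma iterate_artinSchreier_eq_zero_eq_image {K L : Type*} [Field K] [IsAlgClosed K] [CharP K p]
    [CommRing L] [IsDomain L] (φ : K →+* L) (k : ℕ) :
    {u : L | (fun y : L => y ^ p - y)^[k] u = 0} =
      φ '' {c : K | (fun y : K => y ^ p - y)^[k] c = 0} := by
  let _ : Algebra K L := φ.toAlgebra
  have hsemiconj : Function.Semiconj φ (fun y => y ^ p - y) (fun y => y ^ p - y) :=
    fun y => by simp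
  symm
  refine Set.eq_of_subset_of_ncard_le ?_ ?_ ?_
  · rintro _ ⟨c, hc, rfl⟩
    rw [Set.mem_ofPred_eq, ← (hsemiconj.iterate_right k).eq, hc.out, map_zero]
  · rw [Set.ncard_image_of_injective _ φ.injective, ncard_iterate_artinSchreier_eq_zero,
      ← rootSet_artinSchreierIter p (K := K), ← natDegree_artinSchreierIter p (R := K) k]
    exact ncard_rootSet_le _ _
  · rw [← rootSet_artinSchreierIter p (K := K)]
    exact rootSet_finite _ _

def artinSchreier (R : Type*) [CommRing R] [CharP R p] : AddMonoid.End R where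
  toFun y := y ^ p - y
  map_zero' := by simp [(Fact.out : p.Prime).ne_zero]
  map_add' x y := by simp only [add_pow_char]; ring

lemma iterate_artinSchreier_sub {R : Type*} [CommRing R] [CharP R p] (k : ℕ) (x y : R) :
    (fun y : R => y ^ p - y)^[k] (x - y) =
      (fun y : R => y ^ p - y)^[k] x - (fun y : R => y ^ p - y)^[k] y :=
  map_sub (artinSchreier p R ^ k) x y

lemma ASiterH_eq_artinSchreierIter (k : ℕ) : ASiterH p k = artinSchreierIter (H p) p k := by
  induction k with
  | zero => rfl
  | succ k ih => rw [ASiterH, artinSchreierIter, ih]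

lemma eval_ASiterH (k : ℕ) (u : H p) :
    eval u (ASiterH p k) = (fun y : H p => y ^ p - y)^[k] u := by
  rw [ASiterH_eq_artinSchreierIter, ← coe_aeval_eq_eval, aeval_artinSchreierIter]

namespace HahnSeries

variable {Γ R : Type*}

lemma support_pow_subset_Iio_zero [AddCommMonoid Γ] [PartialOrder Γ] [IsOrderedCancelAddMonoid Γ]
    [Semiring R] {x : HahnSeries Γ R} (hx : x.support ⊆ Set.Iio 0) {k : ℕ} (hk : k ≠ 0) :
    (x ^ k).support ⊆ Set.Iio 0 := by
  induction k with
  | zero => exact absurd rfl hk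
  | succ k ih =>
    rcases eq_or_ne k 0 with rfl | hk'
    · simpa using hx
    rw [pow_succ]
    refine support_mul_subset.trans ?_
    rintro _ ⟨a, ha, b, hb, rfl⟩
    exact add_neg (ih hk' ha) (hx hb)

lemma eq_zero_of_support_subset_Iio [LinearOrder Γ] [DenselyOrdered Γ] [Zero R]
    {x : HahnSeries Γ R} {a : Γ} (hsupp : x.support ⊆ Set.Iio a)
    (hle : ∀ b < a, (b : WithTop Γ) ≤ x.orderTop) : x = 0 := by
  by_contra hx
  obtain ⟨g, hg⟩ := support_nonempty_iff.2 hx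
  obtain ⟨b, hgb, hba⟩ := exists_between (hsupp hg)
  exact hg (coeff_eq_zero_of_lt_orderTop ((WithTop.coe_lt_coe.2 hgb).trans_le (hle b hba)))

end HahnSeries

instance : CharP (H p) p := charP_of_injective_ringHom (C_injective (Γ := ℚ) (R := Fbar p)) p

lemma natCast_mul_expo_succ (j : ℕ) : (p : ℚ) * expo p (j + 1) = expo p j := by
  have hp : (p : ℚ) ≠ 0 := (one_pos.trans (one_lt_p p)).ne'
  simp only [expo, pow_succ _ (j + 1)]
  field_simp

lemma natCast_mul_expo_zero : (p : ℚ) * expo p 0 = -1 := by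
  have hp : (p : ℚ) ≠ 0 := (one_pos.trans (one_lt_p p)).ne'
  simp [expo, hp]

lemma expo_neg (j : ℕ) : expo p j < 0 := by
  have := one_pos.trans (one_lt_p p)
  simp only [expo, neg_lt_zero]
  positivity

lemma expo_strictMono : StrictMono (expo p) := fun j k hjk => by
  simp only [expo, neg_lt_neg_iff]
  exact inv_strictAnti₀ (pow_pos (one_pos.trans (one_lt_p p)) _)
    (pow_lt_pow_right₀ (one_lt_p p) (by omega))

lemma exists_lt_expo {q : ℚ} (hq : q < 0) : ∃ m, q < expo p m := by
  obtain ⟨m, hm⟩ := pow_unbounded_of_one_lt (-q)⁻¹ (one_lt_p p)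
  refine ⟨m, ?_⟩
  have hpow : (-q)⁻¹ < (p : ℚ) ^ (m + 1) :=
    hm.trans_le (pow_le_pow_right₀ (one_lt_p p).le m.le_succ)
  have := inv_lt_of_inv_lt₀ (neg_pos.2 hq) hpow
  simp only [expo]
  linarith

lemma sn_coeff_expo (n k : ℕ) : (sn p n).coeff (expo p k) = (k.choose n : Fbar p) := by
  classical
  change (if h : ∃ j : ℕ, n ≤ j ∧ expo p k = expo p j then
    (Nat.choose h.choose n : Fbar p) else 0) = _
  by_cases hnk : n ≤ k
  · have h : ∃ j : ℕ, n ≤ j ∧ expo p k = expo p j := ⟨k, hnk, rfl⟩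
    rw [dif_pos h, ← (expo_strictMono p).injective h.choose_spec.2]
  · rw [dif_neg fun ⟨j, hj, hkj⟩ => hnk ((expo_strictMono p).injective hkj ▸ hj),
      Nat.choose_eq_zero_of_lt (not_le.1 hnk), Nat.cast_zero]

lemma sn_coeff_of_notMem_range {n : ℕ} {q : ℚ} (hq : q ∉ Set.range (expo p)) :
    (sn p n).coeff q = 0 := by
  classical
  change (if h : ∃ j : ℕ, n ≤ j ∧ q = expo p j then
    (Nat.choose h.choose n : Fbar p) else 0) = 0
  exact dif_neg fun ⟨j, _, hqj⟩ => hq ⟨j, hqj.symm⟩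

lemma support_sn_subset (n : ℕ) : (sn p n).support ⊆ Set.Iio 0 := by
  intro q hq
  by_cases hrange : q ∈ Set.range (expo p)
  · obtain ⟨j, rfl⟩ := hrange
    exact expo_neg p j
  · exact absurd (sn_coeff_of_notMem_range p hrange) hq

-- The terms with `j < n` vanish, so this is `sₙ` truncated below the exponent `expo p m`.
noncomputable def partialSn (n m : ℕ) : H p :=
  ∑ j ∈ Finset.range m, single (expo p j) (j.choose n : Fbar p)

lemma expo_le_orderTop_sn_sub_partialSn (n m : ℕ) :
    (expo p m : WithTop ℚ) ≤ (sn p n - partialSn p n m).orderTop := by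
  refine le_orderTop_iff_forall.2 fun q hq => ?_
  rw [HahnSeries.coeff_sub, partialSn, HahnSeries.coeff_sum, sub_eq_zero]
  by_cases hrange : q ∈ Set.range (expo p)
  · obtain ⟨k, rfl⟩ := hrange
    have hkm : k ∈ Finset.range m :=
      Finset.mem_range.2 ((expo_strictMono p).lt_iff_lt.1 (WithTop.coe_lt_coe.1 hq))
    rw [sn_coeff_expo, Finset.sum_eq_single_of_mem k hkm, coeff_single_same]
    intro j _ hjk
    exact coeff_single_of_ne ((expo_strictMono p).injective.ne hjk).symm
  · rw [sn_coeff_of_notMem_range p hrange]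
    exact (Finset.sum_eq_zero fun j _ => coeff_single_of_ne fun h => hrange ⟨j, h.symm⟩).symm

lemma partialSn_pow (n m : ℕ) :
    partialSn p n m ^ p =
      ∑ j ∈ Finset.range m, single ((p : ℚ) * expo p j) (j.choose n : Fbar p) := by
  rw [← frobenius_def, partialSn, map_sum]
  refine Finset.sum_congr rfl fun j _ => ?_
  rw [frobenius_def, single_pow, nsmul_eq_mul, ← frobenius_def, map_natCast]

lemma partialSn_zero_succ_pow (m : ℕ) :
    partialSn p 0 (m + 1) ^ p = single (-1) 1 + partialSn p 0 m := by
  rw [partialSn_pow]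
  simp [partialSn, Finset.sum_range_succ', natCast_mul_expo_succ, natCast_mul_expo_zero, add_comm]

lemma partialSn_succ_succ_pow (n m : ℕ) :
    partialSn p (n + 1) (m + 1) ^ p = partialSn p (n + 1) m + partialSn p n m := by
  rw [partialSn_pow]
  simp [partialSn, Finset.sum_range_succ', natCast_mul_expo_succ, Nat.choose_succ_succ',
    Finset.sum_add_distrib, add_comm]

lemma expo_le_orderTop_sn_pow_sub_partialSn_pow (n m : ℕ) :
    (expo p m : WithTop ℚ) ≤ (sn p n ^ p - partialSn p n (m + 1) ^ p).orderTop := by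
  rw [← sub_pow_char]
  calc (expo p m : WithTop ℚ) = p • (expo p (m + 1) : WithTop ℚ) := by
        rw [← natCast_mul_expo_succ, ← nsmul_eq_mul, WithTop.coe_nsmul]
    _ ≤ p • (sn p n - partialSn p n (m + 1)).orderTop :=
        nsmul_le_nsmul_right (expo_le_orderTop_sn_sub_partialSn p n (m + 1)) p
    _ ≤ ((sn p n - partialSn p n (m + 1)) ^ p).orderTop := orderTop_nsmul_le_orderTop_pow

lemma support_sn_pow_sub_sn_subset (n : ℕ) : (sn p n ^ p - sn p n).support ⊆ Set.Iio 0 :=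
  (support_sub_subset _ _).trans <| Set.union_subset
    (support_pow_subset_Iio_zero (support_sn_subset p n) (Fact.out : p.Prime).ne_zero)
    (support_sn_subset p n)

lemma sn_zero_pow_sub : sn p 0 ^ p - sn p 0 = single (-1) 1 := by
  rw [← sub_eq_zero]
  refine eq_zero_of_support_subset_Iio (a := 0) ?_ fun b hb => ?_
  · refine (support_sub_subset _ _).trans
      (Set.union_subset (support_sn_pow_sub_sn_subset p 0) ?_)
    simp [support_single_of_ne]
  obtain ⟨m, hm⟩ := exists_lt_expo p hb
  have hsplit : sn p 0 ^ p - sn p 0 - single (-1) 1 =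
      (sn p 0 ^ p - partialSn p 0 (m + 1) ^ p) - (sn p 0 - partialSn p 0 m) := by
    rw [partialSn_zero_succ_pow]; ring
  rw [hsplit]
  exact (WithTop.coe_le_coe.2 hm.le).trans <| (le_min
    (expo_le_orderTop_sn_pow_sub_partialSn_pow p 0 m)
    (expo_le_orderTop_sn_sub_partialSn p 0 m)).trans min_orderTop_le_orderTop_sub

lemma sn_succ_pow_sub (n : ℕ) : sn p (n + 1) ^ p - sn p (n + 1) = sn p n := by
  rw [← sub_eq_zero]
  refine eq_zero_of_support_subset_Iio (a := 0) ?_ fun b hb => ?_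
  · exact (support_sub_subset _ _).trans
      (Set.union_subset (support_sn_pow_sub_sn_subset p (n + 1)) (support_sn_subset p n))
  obtain ⟨m, hm⟩ := exists_lt_expo p hb
  have hsplit : sn p (n + 1) ^ p - sn p (n + 1) - sn p n =
      (sn p (n + 1) ^ p - partialSn p (n + 1) (m + 1) ^ p) -
        (sn p (n + 1) - partialSn p (n + 1) m) - (sn p n - partialSn p n m) := by
    rw [partialSn_succ_succ_pow]; ring
  rw [hsplit]
  exact (WithTop.coe_le_coe.2 hm.le).trans <| (le_min (le_min
    (expo_le_orderTop_sn_pow_sub_partialSn_pow p (n + 1) m)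
    (expo_le_orderTop_sn_sub_partialSn p (n + 1) m))
    (expo_le_orderTop_sn_sub_partialSn p n m)).trans <|
      (min_le_min_right _ min_orderTop_le_orderTop_sub).trans min_orderTop_le_orderTop_sub

lemma iterate_artinSchreier_sn (n : ℕ) :
    (fun y : H p => y ^ p - y)^[n + 1] (sn p n) = single (-1) 1 := by
  induction n with
  | zero => exact sn_zero_pow_sub p
  | succ n ih => rw [Function.iterate_succ_apply, sn_succ_pow_sub, ih]

/-- the set of roots in `H` of `AS^(n+1)(x) - t⁻¹` equals
`{sₙ + c : c ∈ F, AS^(n+1)(c) = 0}` (constants viewed in `H`); it has exactly `p^(n+1)`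
elements, and every root `u ≠ sₙ` satisfies `v(sₙ - u) = 0`. -/
theorem AS_roots_krasner (n : ℕ) :
    {u : H p | Polynomial.eval u
        (ASiterH p (n + 1) - Polynomial.C (HahnSeries.single (-1 : ℚ) (1 : Fbar p))) = 0}
      = {u : H p | ∃ c : Fbar p, (fun y : Fbar p => y ^ p - y)^[n + 1] c = 0 ∧
          u = sn p n + HahnSeries.C c} ∧
    Set.ncard {u : H p | Polynomial.eval u
        (ASiterH p (n + 1) - Polynomial.C (HahnSeries.single (-1 : ℚ) (1 : Fbar p))) = 0} = p ^ (n + 1) ∧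
    ∀ u : H p, Polynomial.eval u
        (ASiterH p (n + 1) - Polynomial.C (HahnSeries.single (-1 : ℚ) (1 : Fbar p))) = 0 →
      u ≠ sn p n → v p (sn p n - u) = ((0 : ℚ) : WithTop ℚ) := by
  have hroots : {u : H p | Polynomial.eval u
      (ASiterH p (n + 1) - Polynomial.C (HahnSeries.single (-1 : ℚ) (1 : Fbar p))) = 0} =
        (sn p n + HahnSeries.C ·) '' {c : Fbar p | (fun y : Fbar p => y ^ p - y)^[n + 1] c = 0} := by
    ext u
    rw [Set.mem_ofPred_eq, eval_sub, eval_C, eval_ASiterH, sub_eq_zero,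
      ← iterate_artinSchreier_sn p n, ← sub_eq_zero, ← iterate_artinSchreier_sub]
    refine (Set.ext_iff.1 (iterate_artinSchreier_eq_zero_eq_image p
      (HahnSeries.C : Fbar p →+* H p) (n + 1)) (u - sn p n)).trans ?_
    simp [sub_eq_iff_eq_add', eq_comm]
  refine ⟨?_, ?_, ?_⟩
  · rw [hroots]; ext u; simp [eq_comm]
  · rw [hroots, Set.ncard_image_of_injective _
      fun a b hab => HahnSeries.C_injective (add_left_cancel hab),
      ncard_iterate_artinSchreier_eq_zero]
  · rintro u hu hne
    obtain ⟨c, -, rfl⟩ := hroots.subset hu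
    have hc : c ≠ 0 := by rintro rfl; simp at hne
    rw [v, sub_add_cancel_left, orderTop_neg, C_apply, orderTop_single hc]
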